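/- arXiv:2312.01395 — 4 statements merged into one kernel-verified Lean document; each statement's English description precedes it below -/
import Mathlib

section
/- (Montgomery's theta inequality.) For every t > 0 and every Δ > 0, one has θ₃(e^{−tΔ})·θ₃(e^{−t/Δ}) ≥ θ₃(e^{−t})², with equality if and only if Δ = 1. In particular, for each fixed t > 0 the function Δ ↦ θ₃(e^{−tΔ})·θ₃(e^{−t/Δ}) on (0,∞) attains its unique minimum at Δ = 1. -/
/-!
Write `T_k(s) = ∑_{n ∈ ℤ} n^{2k} e^{-s n²}`, so that `θ₃(e^{-s}) = T_0(s)` and `T_k' = -T_{k+1}`.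
The product `Φ(x) = T_0(t x) T_0(t / x)` satisfies `Φ(1/x) = Φ(x)` and
`Φ'(x) = Φ(x) (L(t/x) - L(t x)) / x` with `L(s) = s T_1(s) / T_0(s)`, so `Φ` is strictly increasing
on `[1, ∞)` as soon as `L` is strictly decreasing on `(0, ∞)`.
Differentiating the logarithm of the Jacobi transformation `T_0(π²/s) = √(s/π) T_0(s)` gives
`L(s) + L(π²/s) = 1/2`, and since `π²/3 > 3` it is enough to know that `L` decreases on `[3, ∞)`.
There `L' < 0` amounts to `T_0 T_1 + s T_1² < s T_0 T_2`, which follows from `T_1 ≤ T_2`, `T_0 ≥ 1`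
and the crude bound `T_1(s) < 2/3`.
-/

/-- The Jacobi theta function `θ₃(q) = Σ_{j ∈ ℤ} q^(j²)`. -/
noncomputable def theta3 (q : ℝ) : ℝ := ∑' j : ℤ, q ^ (j.natAbs ^ 2)

open Real Set Filter

noncomputable def thetaMoment (k : ℕ) (s : ℝ) : ℝ :=
  ∑' n : ℤ, ((n : ℝ) ^ 2) ^ k * exp (-s * n ^ 2)

lemma theta3_exp_neg (s : ℝ) : theta3 (exp (-s)) = thetaMoment 0 s := by
  refine tsum_congr fun n => ?_
  rw [← exp_nat_mul, pow_zero, one_mul, Nat.cast_pow, Nat.cast_natAbs, Int.cast_abs, sq_abs,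
    mul_comm]

lemma summable_thetaMoment (k : ℕ) {s : ℝ} (hs : 0 < s) :
    Summable fun n : ℤ => ((n : ℝ) ^ 2) ^ k * exp (-s * n ^ 2) := by
  refine (summable_pow_mul_jacobiTheta₂_term_bound 0 (div_pos hs pi_pos) (2 * k)).congr
    fun n => ?_
  rw [pow_mul, Int.cast_abs, sq_abs]
  congr 2
  field_simp
  ring

lemma hasDerivAt_thetaMoment (k : ℕ) {s : ℝ} (hs : 0 < s) :
    HasDerivAt (thetaMoment k) (-thetaMoment (k + 1) s) s := by
  have hderiv (n : ℤ) (x : ℝ) : HasDerivAt (fun y => ((n : ℝ) ^ 2) ^ k * exp (-y * n ^ 2))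
      (-(((n : ℝ) ^ 2) ^ (k + 1) * exp (-x * n ^ 2))) x :=
    ((((hasDerivAt_neg x).mul_const ((n : ℝ) ^ 2)).exp).const_mul
      (((n : ℝ) ^ 2) ^ k)).congr_deriv (by ring)
  have hbound (n : ℤ) (x : ℝ) (hx : x ∈ Ioi (s / 2)) :
      ‖-(((n : ℝ) ^ 2) ^ (k + 1) * exp (-x * n ^ 2))‖ ≤
        ((n : ℝ) ^ 2) ^ (k + 1) * exp (-(s / 2) * n ^ 2) := by
    rw [norm_neg, Real.norm_of_nonneg (by positivity)]
    gcongr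
    exact (mem_Ioi.mp hx).le
  have hs2 : s ∈ Ioi (s / 2) := by simp only [mem_Ioi]; linarith
  unfold thetaMoment
  rw [← tsum_neg]
  exact hasDerivAt_tsum_of_isPreconnected (summable_thetaMoment (k + 1) (half_pos hs))
    isOpen_Ioi isPreconnected_Ioi (fun n x _ => hderiv n x) hbound hs2
    (summable_thetaMoment k hs) hs2

lemma one_le_thetaMoment_zero {s : ℝ} (hs : 0 < s) : 1 ≤ thetaMoment 0 s := by
  simpa [thetaMoment] using (summable_thetaMoment 0 hs).le_tsum 0 (fun n _ => by positivity)

lemma thetaMoment_pos (k : ℕ) {s : ℝ} (hs : 0 < s) : 0 < thetaMoment k s :=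
  (summable_thetaMoment k hs).tsum_pos (fun n => by positivity) 1 (by simp [exp_pos])

lemma thetaMoment_one_le_two {s : ℝ} (hs : 0 < s) : thetaMoment 1 s ≤ thetaMoment 2 s := by
  refine (summable_thetaMoment 1 hs).tsum_le_tsum (fun n => ?_) (summable_thetaMoment 2 hs)
  have h : (n : ℝ) ^ 2 ≤ ((n : ℝ) ^ 2) ^ 2 := by
    have := Int.le_self_sq (n ^ 2)
    exact_mod_cast this
  rw [pow_one]
  gcongr

lemma sq_mul_exp_neg_mul_sq_le {s : ℝ} (hs : 3 ≤ s) (n : ℕ) :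
    (n : ℝ) ^ 2 * exp (-s * n ^ 2) ≤ n * exp (-2) ^ n := by
  have hn : (n : ℝ) ≤ n ^ 2 := by exact_mod_cast Nat.le_self_pow two_ne_zero n
  calc (n : ℝ) ^ 2 * exp (-s * n ^ 2) = n * (n * exp (-s * n ^ 2)) := by ring
    _ ≤ n * (exp n * exp (-s * n ^ 2)) := by
      gcongr
      linarith [add_one_le_exp (n : ℝ)]
    _ ≤ n * exp (-2) ^ n := by
      rw [← exp_add, ← exp_nat_mul]
      gcongr
      nlinarith

lemma thetaMoment_one_lt {s : ℝ} (hs : 3 ≤ s) : thetaMoment 1 s < 2 / 3 := by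
  have hr5 : exp (-2) ≤ 1 / 5 := by
    rw [exp_neg, inv_le_comm₀ (exp_pos 2) (by norm_num)]
    linarith [quadratic_le_exp_of_nonneg (x := 2) zero_le_two]
  set r := exp (-2)
  have hr : ‖r‖ < 1 := by
    rw [norm_of_nonneg (exp_pos _).le]
    linarith
  have hfold : thetaMoment 1 s = ∑' n : ℕ, 2 * ((n : ℝ) ^ 2 * exp (-s * n ^ 2)) := by
    have h := tsum_nat_add_neg (summable_thetaMoment 1 (by linarith : 0 < s))
    simpa [two_mul, thetaMoment] using h.symm
  have hle (n : ℕ) := mul_le_mul_of_nonneg_left (sq_mul_exp_neg_mul_sq_le hs n) zero_le_two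
  have hgeom : Summable fun n : ℕ => 2 * (n * r ^ n) :=
    (hasSum_coe_mul_geometric_of_norm_lt_one hr).summable.mul_left 2
  calc thetaMoment 1 s ≤ ∑' n : ℕ, 2 * (n * r ^ n) := by
        rw [hfold]
        exact (hgeom.of_nonneg_of_le (fun n => by positivity) hle).tsum_le_tsum hle hgeom
    _ = 2 * (r / (1 - r) ^ 2) := by rw [tsum_mul_left, tsum_coe_mul_geometric_of_norm_lt_one hr]
    _ < 2 / 3 := by
      have : r / (1 - r) ^ 2 < 1 / 3 := by
        rw [div_lt_iff₀ (by nlinarith)]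
        nlinarith
      linarith

lemma thetaMoment_zero_pi_sq_div {s : ℝ} (hs : 0 < s) :
    thetaMoment 0 (π ^ 2 / s) = √(s / π) * thetaMoment 0 s := by
  have h := tsum_exp_neg_mul_int_sq (div_pos hs pi_pos)
  have e1 : -π * (s / π) = -s := by field_simp
  have e2 : -π / (s / π) = -(π ^ 2 / s) := by field_simp
  simp only [thetaMoment, pow_zero, one_mul]
  rw [e1, e2, ← sqrt_eq_rpow] at h
  rw [h, ← mul_assoc, one_div, mul_inv_cancel₀ (by positivity), one_mul]

lemma log_thetaMoment_zero_pi_sq_div {s : ℝ} (hs : 0 < s) :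
    log (thetaMoment 0 (π ^ 2 / s)) = log (thetaMoment 0 s) + (log s - log π) / 2 := by
  rw [thetaMoment_zero_pi_sq_div hs, log_mul (by positivity) (thetaMoment_pos 0 hs).ne',
    log_sqrt (by positivity), log_div hs.ne' pi_ne_zero]
  ring

/-- `-s · (d/ds) log θ₃(e^{-s})`. -/
noncomputable def thetaElasticity (s : ℝ) : ℝ := s * thetaMoment 1 s / thetaMoment 0 s

lemma thetaElasticity_add_pi_sq_div {s : ℝ} (hs : 0 < s) :
    thetaElasticity s + thetaElasticity (π ^ 2 / s) = 1 / 2 := by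
  have hs' : 0 < π ^ 2 / s := by positivity
  have hlhs := (((hasDerivAt_thetaMoment 0 hs').comp s
    ((hasDerivAt_inv hs.ne').const_mul (π ^ 2))).log (thetaMoment_pos 0 hs').ne')
  have hrhs := ((hasDerivAt_thetaMoment 0 hs).log (thetaMoment_pos 0 hs).ne').add
    (((hasDerivAt_log hs.ne').sub_const (log π)).div_const 2)
  have heq : (fun x => log (thetaMoment 0 (π ^ 2 / x))) =ᶠ[nhds s]
      fun x => log (thetaMoment 0 x) + (log x - log π) / 2 :=
    eventually_of_mem (Ioi_mem_nhds hs) fun x hx => log_thetaMoment_zero_pi_sq_div hx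
  have h := hlhs.unique (hrhs.congr_of_eventuallyEq heq)
  have h0 := (thetaMoment_pos 0 hs).ne'
  have h0' := (thetaMoment_pos 0 hs').ne'
  simp only [thetaElasticity, Function.comp_def] at h ⊢
  field_simp at h ⊢
  linear_combination h

lemma hasDerivAt_thetaElasticity {s : ℝ} (hs : 0 < s) :
    HasDerivAt thetaElasticity
      (((thetaMoment 1 s - s * thetaMoment 2 s) * thetaMoment 0 s + s * thetaMoment 1 s ^ 2) /
        thetaMoment 0 s ^ 2) s :=
  (((hasDerivAt_id s).mul (hasDerivAt_thetaMoment 1 hs)).div (hasDerivAt_thetaMoment 0 hs)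
    (thetaMoment_pos 0 hs).ne').congr_deriv (by simp only [Pi.mul_apply, id]; ring)

lemma strictAntiOn_thetaElasticity_Ici_three : StrictAntiOn thetaElasticity (Ici 3) := by
  have hpos {x : ℝ} (hx : x ∈ Ici 3) : 0 < x := lt_of_lt_of_le three_pos hx
  refine strictAntiOn_of_deriv_neg (convex_Ici 3)
    (fun x hx => (hasDerivAt_thetaElasticity (hpos hx)).continuousAt.continuousWithinAt)
    fun x hx => ?_
  rw [interior_Ici] at hx
  have hx3 : 3 ≤ x := le_of_lt hx
  have hx0 : 0 < x := hpos hx3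
  rw [(hasDerivAt_thetaElasticity hx0).deriv]
  refine div_neg_of_neg_of_pos ?_ (pow_pos (thetaMoment_pos 0 hx0) 2)
  have h12 := thetaMoment_one_le_two hx0
  have h1 := thetaMoment_pos 1 hx0
  have h1' := thetaMoment_one_lt hx3
  have h0 := one_le_thetaMoment_zero hx0
  -- the numerator is at most `T₁ ((1 - x) T₀ + x T₁) ≤ T₁ (1 - x + 2x/3)`, and `x ≥ 3`
  nlinarith [mul_le_mul_of_nonneg_left h12 (by positivity : 0 ≤ x * thetaMoment 0 x),
    mul_lt_mul_of_pos_left h1' (by positivity : 0 < x * thetaMoment 1 x),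
    mul_le_mul_of_nonneg_left h0 (by nlinarith : 0 ≤ (x - 1) * thetaMoment 1 x)]

lemma strictAntiOn_thetaElasticity : StrictAntiOn thetaElasticity (Ioi 0) := by
  have hlow : StrictAntiOn thetaElasticity (Ioc 0 3) := by
    have hmaps {x : ℝ} (hx : x ∈ Ioc 0 3) : π ^ 2 / x ∈ Ici 3 := by
      rw [mem_Ici, le_div_iff₀ hx.1]
      nlinarith [pi_gt_three, hx.2]
    intro x hx y hy hxy
    have hrefl := strictAntiOn_thetaElasticity_Ici_three (hmaps hy) (hmaps hx)
      (div_lt_div_of_pos_left (by positivity) hx.1 hxy)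
    linarith [thetaElasticity_add_pi_sq_div hx.1, thetaElasticity_add_pi_sq_div hy.1]
  have h := hlow.union strictAntiOn_thetaElasticity_Ici_three (isGreatest_Ioc three_pos)
    isLeast_Ici
  rwa [Ioc_union_Ici_eq_Ioi three_pos] at h

lemma hasDerivAt_thetaMoment_mul_div {t x : ℝ} (ht : 0 < t) (hx : 0 < x) :
    HasDerivAt (fun y => thetaMoment 0 (t * y) * thetaMoment 0 (t / y))
      (thetaMoment 0 (t * x) * thetaMoment 0 (t / x) / x *
        (thetaElasticity (t / x) - thetaElasticity (t * x))) x := by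
  have hmul := (hasDerivAt_thetaMoment 0 (mul_pos ht hx)).comp x ((hasDerivAt_id x).const_mul t)
  have hdiv := (hasDerivAt_thetaMoment 0 (div_pos ht hx)).comp x
    ((hasDerivAt_inv hx.ne').const_mul t)
  have h0 := (thetaMoment_pos 0 (mul_pos ht hx)).ne'
  have h0' := (thetaMoment_pos 0 (div_pos ht hx)).ne'
  simp only [Function.comp_def] at hmul hdiv
  refine (hmul.mul hdiv).congr_deriv ?_
  simp only [thetaElasticity]
  field_simp
  ring

lemma strictMonoOn_thetaMoment_mul_div {t : ℝ} (ht : 0 < t) :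
    StrictMonoOn (fun y => thetaMoment 0 (t * y) * thetaMoment 0 (t / y)) (Ici 1) := by
  have hpos {x : ℝ} (hx : x ∈ Ici 1) : 0 < x := lt_of_lt_of_le one_pos hx
  refine strictMonoOn_of_deriv_pos (convex_Ici 1)
    (fun x hx => (hasDerivAt_thetaMoment_mul_div ht (hpos hx)).continuousAt.continuousWithinAt)
    fun x hx => ?_
  rw [interior_Ici] at hx
  have hx0 : 0 < x := one_pos.trans hx
  rw [(hasDerivAt_thetaMoment_mul_div ht hx0).deriv]
  have hlt : t / x < t * x := by
    rw [div_lt_iff₀ hx0]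
    nlinarith [mul_lt_mul_of_pos_left (one_lt_mul (le_of_lt hx) hx) ht]
  have hprod := mul_pos (thetaMoment_pos 0 (mul_pos ht hx0)) (thetaMoment_pos 0 (div_pos ht hx0))
  exact mul_pos (div_pos hprod hx0)
    (sub_pos.mpr (strictAntiOn_thetaElasticity (div_pos ht hx0) (mul_pos ht hx0) hlt))

lemma thetaMoment_sq_lt_mul_div {t Δ : ℝ} (ht : 0 < t) (hΔ : 0 < Δ) (hne : Δ ≠ 1) :
    thetaMoment 0 t ^ 2 < thetaMoment 0 (t * Δ) * thetaMoment 0 (t / Δ) := by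
  have hgt {x : ℝ} (hx : 1 < x) :
      thetaMoment 0 t ^ 2 < thetaMoment 0 (t * x) * thetaMoment 0 (t / x) := by
    simpa [sq] using strictMonoOn_thetaMoment_mul_div ht self_mem_Ici (le_of_lt hx) hx
  rcases hne.lt_or_gt with hlt | hgt1
  · have h := hgt (one_lt_inv₀ hΔ |>.mpr hlt)
    rwa [← div_eq_mul_inv, div_inv_eq_mul, mul_comm] at h
  · exact hgt hgt1

/-- Montgomery's theta inequality: for every `t > 0` and `Δ > 0`,
`θ₃(e^{−tΔ})·θ₃(e^{−t/Δ}) ≥ θ₃(e^{−t})²`, with equality iff `Δ = 1`;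
in particular `Δ ↦ θ₃(e^{−tΔ})·θ₃(e^{−t/Δ})` attains its unique minimum at `Δ = 1`. -/
theorem montgomery_theta_inequality (t Δ : ℝ) (ht : 0 < t) (hΔ : 0 < Δ) :
    theta3 (Real.exp (-(t * Δ))) * theta3 (Real.exp (-(t / Δ))) ≥
      (theta3 (Real.exp (-t))) ^ 2 ∧
    (theta3 (Real.exp (-(t * Δ))) * theta3 (Real.exp (-(t / Δ))) =
      (theta3 (Real.exp (-t))) ^ 2 ↔ Δ = 1) := by
  simp only [theta3_exp_neg]
  rcases eq_or_ne Δ 1 with rfl | hne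
  · simp [sq]
  · have h := thetaMoment_sq_lt_mul_div ht hΔ hne
    exact ⟨h.le, iff_of_false h.ne' hne⟩
end

section
/- (Integral representation of the energy.) Let μ be a signed Borel measure on (0,∞), A > 0 and Δ > 0. Assume that s ↦ e^{−r²s} is |μ|-integrable for every r > 0, define f(r) := ∫₀^∞ e^{−r²s} dμ(s), and assume Σ_{(j,k)∈ℤ²∖{(0,0)}} ∫₀^∞ e^{−A(j²/Δ + k²Δ)s} d|μ|(s) < ∞. Then E(A,Δ) = (1/2) ∫₀^∞ [ θ₃(e^{−As/Δ})·θ₃(e^{−AsΔ}) − 1 ] dμ(s). -/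
/-!
Expanding the product of the two theta series gives
`θ₃(e^{-As/Δ}) θ₃(e^{-AsΔ}) - 1 = Σ_{(j,k) ≠ 0} e^{-A(j²/Δ + k²Δ)s}`, a series of nonnegative
functions of `s`. By Tonelli, the summability hypothesis on `|μ| = μp + μn` lets us integrate
it term by term against `μp` and against `μn`, and the difference of the two `(j,k)`-th terms
is `f` at the lattice distance `√(A(j²/Δ + k²Δ))`.
-/

open MeasureTheory

noncomputable def Θ (t : ℝ) : ℝ := theta3 (Real.exp (-t))

noncomputable def rectEnergy (f : ℝ → ℝ) (A Δ : ℝ) : ℝ :=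
  (1 / 2) * ∑' p : {p : ℤ × ℤ // p ≠ 0},
    f (Real.sqrt (A * ((p.1.1 : ℝ) ^ 2 / Δ + (p.1.2 : ℝ) ^ 2 * Δ)))

open Set

lemma HasSum.subtype_ne {β α : Type*} [AddCommGroup α] [TopologicalSpace α]
    [IsTopologicalAddGroup α] {f : β → α} {a : α} (hf : HasSum f a) (b : β) :
    HasSum (fun x : {x // x ≠ b} => f x) (a - f b) :=
  (hasSum_singleton b f).hasSum_iff_compl.1 hf

lemma hasSum_integral_tsum_of_nonneg {α ι : Type*} [MeasurableSpace α] [Countable ι]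
    {μ : Measure α} {F : ι → α → ℝ} (hF : ∀ i, AEStronglyMeasurable (F i) μ)
    (hF_nonneg : ∀ i, 0 ≤ᵐ[μ] F i) (hF_fin : ∑' i, ∫⁻ x, ENNReal.ofReal (F i x) ∂μ ≠ ⊤) :
    HasSum (fun i => ∫ x, F i x ∂μ) (∫ x, ∑' i, F i x ∂μ) := by
  have hlint : ∀ i, ∫⁻ x, ‖F i x‖ₑ ∂μ = ∫⁻ x, ENNReal.ofReal (F i x) ∂μ := fun i =>
    lintegral_congr_ae <| (hF_nonneg i).mono fun x hx => Real.enorm_eq_ofReal hx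
  rw [integral_tsum hF (by simpa only [hlint] using hF_fin)]
  refine ((ENNReal.summable_toReal hF_fin).congr fun i => ?_).hasSum
  exact (integral_eq_lintegral_of_nonneg_ae (hF_nonneg i) (hF i)).symm

lemma summable_exp_neg_mul_int_sq {t : ℝ} (ht : 0 < t) :
    Summable fun j : ℤ => Real.exp (-t * (j : ℝ) ^ 2) := by
  refine (summable_pow_mul_jacobiTheta₂_term_bound 0 (div_pos ht Real.pi_pos) 0).congr
    fun j => ?_
  field_simp
  ring_nf

lemma hasSum_Θ {t : ℝ} (ht : 0 < t) :
    HasSum (fun j : ℤ => Real.exp (-t * (j : ℝ) ^ 2)) (Θ t) := by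
  convert (summable_exp_neg_mul_int_sq ht).hasSum using 1
  refine tsum_congr fun j => ?_
  rw [← Real.exp_nat_mul]
  push_cast [Nat.cast_natAbs, sq_abs]
  ring_nf

lemma hasSum_Θ_mul_Θ {t u : ℝ} (ht : 0 < t) (hu : 0 < u) :
    HasSum (fun p : ℤ × ℤ => Real.exp (-(t * (p.1 : ℝ) ^ 2 + u * (p.2 : ℝ) ^ 2)))
      (Θ t * Θ u) := by
  have hprod := (summable_exp_neg_mul_int_sq ht).mul_of_nonneg
    (summable_exp_neg_mul_int_sq hu) (fun _ => (Real.exp_pos _).le) (fun _ => (Real.exp_pos _).le)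
  simpa only [← Real.exp_add, ← neg_add, neg_mul] using (hasSum_Θ ht).mul (hasSum_Θ hu) hprod

noncomputable def rectNormSq (A Δ : ℝ) (p : ℤ × ℤ) : ℝ :=
  A * ((p.1 : ℝ) ^ 2 / Δ + (p.2 : ℝ) ^ 2 * Δ)

lemma rectNormSq_pos {A Δ : ℝ} (hA : 0 < A) (hΔ : 0 < Δ) {p : ℤ × ℤ} (hp : p ≠ 0) :
    0 < rectNormSq A Δ p := by
  obtain ⟨j, k⟩ := p
  have hjk : j ≠ 0 ∨ k ≠ 0 := by contrapose! hp; simp [hp]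
  unfold rectNormSq
  rcases hjk with hj | hk
  · have : (j : ℝ) ≠ 0 := by exact_mod_cast hj
    positivity
  · have : (k : ℝ) ≠ 0 := by exact_mod_cast hk
    positivity

lemma hasSum_exp_neg_rectNormSq_mul {A Δ s : ℝ} (hA : 0 < A) (hΔ : 0 < Δ) (hs : 0 < s) :
    HasSum (fun p : {p : ℤ × ℤ // p ≠ 0} => Real.exp (-rectNormSq A Δ p * s))
      (Θ (A * s / Δ) * Θ (A * s * Δ) - 1) := by
  have h := (hasSum_Θ_mul_Θ (t := A * s / Δ) (u := A * s * Δ) (by positivity)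
    (by positivity)).subtype_ne 0
  simp only [Prod.fst_zero, Prod.snd_zero, Int.cast_zero, zero_pow two_ne_zero, mul_zero,
    add_zero, neg_zero, Real.exp_zero] at h
  refine h.congr_fun fun p => ?_
  unfold rectNormSq
  field_simp

lemma hasSum_setIntegral_exp_neg_rectNormSq_mul {A Δ : ℝ} (hA : 0 < A) (hΔ : 0 < Δ)
    {ν : Measure ℝ} (hfin : ∑' p : {p : ℤ × ℤ // p ≠ 0},
      ∫⁻ s in Ioi 0, ENNReal.ofReal (Real.exp (-rectNormSq A Δ p * s)) ∂ν ≠ ⊤) :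
    HasSum (fun p : {p : ℤ × ℤ // p ≠ 0} => ∫ s in Ioi 0, Real.exp (-rectNormSq A Δ p * s) ∂ν)
      (∫ s in Ioi 0, (Θ (A * s / Δ) * Θ (A * s * Δ) - 1) ∂ν) := by
  convert hasSum_integral_tsum_of_nonneg (μ := ν.restrict (Ioi 0))
    (fun p : {p : ℤ × ℤ // p ≠ 0} =>
      (by fun_prop : Continuous fun s => Real.exp (-rectNormSq A Δ p * s)).aestronglyMeasurable)
    (fun p => ae_of_all _ fun s => (Real.exp_pos _).le) hfin using 1
  exact setIntegral_congr_fun measurableSet_Ioi fun s hs =>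
    (hasSum_exp_neg_rectNormSq_mul hA hΔ hs).tsum_eq.symm

theorem energy_integral_representation_general
    (μp μn : Measure ℝ)
    (A Δ : ℝ) (hA : 0 < A) (hΔ : 0 < Δ)
    (f : ℝ → ℝ)
    (hf : ∀ r : ℝ, 0 < r → f r =
      (∫ s in Set.Ioi (0 : ℝ), Real.exp (-r ^ 2 * s) ∂μp) -
        ∫ s in Set.Ioi (0 : ℝ), Real.exp (-r ^ 2 * s) ∂μn)
    (hsum : (∑' p : {p : ℤ × ℤ // p ≠ 0},
      ∫⁻ s in Set.Ioi (0 : ℝ),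
        ENNReal.ofReal
          (Real.exp (-(A * ((p.1.1 : ℝ) ^ 2 / Δ + (p.1.2 : ℝ) ^ 2 * Δ)) * s))
        ∂(μp + μn)) ≠ ⊤) :
    rectEnergy f A Δ =
      (1 / 2) * ((∫ s in Set.Ioi (0 : ℝ), (Θ (A * s / Δ) * Θ (A * s * Δ) - 1) ∂μp) -
        ∫ s in Set.Ioi (0 : ℝ), (Θ (A * s / Δ) * Θ (A * s * Δ) - 1) ∂μn) := by
  obtain ⟨hfin_p, hfin_n⟩ := ENNReal.add_ne_top.1 <| by
    simpa only [Measure.restrict_add, lintegral_add_measure, ENNReal.tsum_add] using hsum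
  have hf_lattice (p : {p : ℤ × ℤ // p ≠ 0}) : f √(rectNormSq A Δ p) =
      (∫ s in Ioi 0, Real.exp (-rectNormSq A Δ p * s) ∂μp) -
        ∫ s in Ioi 0, Real.exp (-rectNormSq A Δ p * s) ∂μn := by
    have hpos := rectNormSq_pos hA hΔ p.2
    rw [hf _ (Real.sqrt_pos.2 hpos), Real.sq_sqrt hpos.le]
  unfold rectEnergy
  congr 1
  exact HasSum.tsum_eq <| HasSum.congr_fun
    ((hasSum_setIntegral_exp_neg_rectNormSq_mul hA hΔ hfin_p).sub
      (hasSum_setIntegral_exp_neg_rectNormSq_mul hA hΔ hfin_n)) hf_lattice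

/-- Integral representation of the energy: if `f(r) = ∫₀^∞ e^{−r²s} dμ(s)` for a signed
Borel measure `μ = μp − μn` (Jordan decomposition, `|μ| = μp + μn`), with all the stated
integrability/summability assumptions, then
`E(A,Δ) = (1/2) ∫₀^∞ [θ₃(e^{−As/Δ})·θ₃(e^{−AsΔ}) − 1] dμ(s)`. -/
theorem energy_integral_representation
    (μp μn : Measure ℝ) [SigmaFinite μp] [SigmaFinite μn] (hsing : μp ⟂ₘ μn)
    (A Δ : ℝ) (hA : 0 < A) (hΔ : 0 < Δ)
    (hint : ∀ r : ℝ, 0 < r →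
      IntegrableOn (fun s => Real.exp (-r ^ 2 * s)) (Set.Ioi 0) (μp + μn))
    (f : ℝ → ℝ)
    (hf : ∀ r : ℝ, 0 < r → f r =
      (∫ s in Set.Ioi (0 : ℝ), Real.exp (-r ^ 2 * s) ∂μp) -
        ∫ s in Set.Ioi (0 : ℝ), Real.exp (-r ^ 2 * s) ∂μn)
    (hsum : (∑' p : {p : ℤ × ℤ // p ≠ 0},
      ∫⁻ s in Set.Ioi (0 : ℝ),
        ENNReal.ofReal
          (Real.exp (-(A * ((p.1.1 : ℝ) ^ 2 / Δ + (p.1.2 : ℝ) ^ 2 * Δ)) * s))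
        ∂(μp + μn)) ≠ ⊤) :
    rectEnergy f A Δ =
      (1 / 2) * ((∫ s in Set.Ioi (0 : ℝ), (Θ (A * s / Δ) * Θ (A * s * Δ) - 1) ∂μp) -
        ∫ s in Set.Ioi (0 : ℝ), (Θ (A * s / Δ) * Θ (A * s * Δ) - 1) ∂μn) :=
  energy_integral_representation_general μp μn A Δ hA hΔ f hf hsum
end

section
/- (Second-order phase transition: pitchfork asymptotics.) Let G : ℝ × ℝ → ℝ be C⁶ on a neighborhood of (A*, 0), with G(A, −ε) = G(A, ε) for all (A, ε) in that neighborhood. Define E₂(A) := (1/2)·∂²G/∂ε²(A,0) and E₄(A) := (1/24)·∂⁴G/∂ε⁴(A,0), and assume E₂(A*) = 0, E₂'(A*) < 0 and E₄(A*) > 0. Then: (i) there exists δ > 0 such that for every A ∈ (A* − δ, A*), ε = 0 is a strict local minimizer of ε ↦ G(A, ε); (ii) there exist δ > 0 and a continuous function ε̄ : (A*, A* + δ) → (0,∞) such that for each A ∈ (A*, A* + δ), ε̄(A) is a critical point of ε ↦ G(A, ε) which is a local minimizer, and ε̄(A)/√(A − A*) → √( −E₂'(A*) / (2·E₄(A*))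 ) as A → A*⁺. -/
open Filter Topology Set

/-!
Write `g = ∂G/∂ε`. Since `G` is even in `ε`, its odd `ε`-derivatives vanish at `ε = 0`, and
Taylor's formula gives, uniformly for `A` near `A*`,
`g(A, ε) = 2 E₂(A) ε + 4 E₄(A) ε³ + O(ε⁴)` and `∂g/∂ε (A, ε) = 2 E₂(A) + 12 E₄(A) ε² + O(ε⁴)`.

Since `E₂(A*) = 0 > E₂'(A*)`, below `A*` we have `E₂(A) > 0`, so `g(A, ·)` crosses zero upwards
at `ε = 0`, a strict minimum. Above `A*` we have `E₂(A) < 0`, and the cubic model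
`4 E₄ ε (ε² - e²)` has the positive root `e(A) = √(-E₂(A) / (2 E₄(A)))`, which is
`≈ √(-E₂'(A*) (A - A*) / (2 E₄(A*)))`. On `(0, 2e]` the remainder is `O(e⁴)`, negligible against
the model on the scale `e`: `g` is negative up to `(1 - θ) e`, positive from `(1 + θ) e` on, and
increasing near `e`. Hence `g(A, ·)` has a single sign change `ε̄(A) ∈ (0, 2e)`, from negative to
positive, so `ε̄(A)` is a local minimum of `G(A, ·)`, `ε̄ / e → 1`, and `ε̄` is continuous because
the sign pattern persists when `A` moves.
-/

theorem abs_sub_taylorSum_le {ρ M : ℝ} {n : ℕ} {f : ℕ → ℝ → ℝ}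
    (hf : ∀ k < n, ∀ t, |t| ≤ ρ → HasDerivAt (f k) (f (k + 1) t) t)
    (hM : ∀ t, |t| ≤ ρ → |f n t| ≤ M) {y : ℝ} (hy : |y| ≤ ρ) :
    |f 0 y - ∑ k ∈ Finset.range n, f k 0 * y ^ k / k.factorial| ≤ M * |y| ^ n := by
  induction n generalizing f y with
  | zero => simpa using hM y hy
  | succ n ih =>
    have hM0 : 0 ≤ M := (abs_nonneg _).trans (hM 0 (by simpa using (abs_nonneg y).trans hy))
    have hmonomial (k : ℕ) (t : ℝ) :
        HasDerivAt (fun s => f (k + 1) 0 * s ^ (k + 1) / (k + 1).factorial)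
          (f (k + 1) 0 * t ^ k / k.factorial) t := by
      refine (((hasDerivAt_pow (k + 1) t).const_mul (f (k + 1) 0)).div_const
        ((k + 1).factorial : ℝ)).congr_deriv ?_
      rw [Nat.factorial_succ]; push_cast; field_simp
    have hderiv : ∀ t, |t| ≤ |y| → HasDerivAt
        (fun s => f 0 s - ∑ k ∈ Finset.range (n + 1), f k 0 * s ^ k / k.factorial)
        (f 1 t - ∑ k ∈ Finset.range n, f (k + 1) 0 * t ^ k / k.factorial) t := by
      intro t ht
      refine (hf 0 (by omega) t (ht.trans hy)).sub ?_
      convert (HasDerivAt.fun_sum (u := Finset.range n) fun k _ => hmonomial k t).add_const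
        (f 0 0) using 1
      ext s; simp [Finset.sum_range_succ']
    have hbound : ∀ t, |t| ≤ |y| →
        |f 1 t - ∑ k ∈ Finset.range n, f (k + 1) 0 * t ^ k / k.factorial| ≤ M * |y| ^ n :=
      fun t ht => (ih (f := fun k => f (k + 1)) (fun k hk s hs => hf (k + 1) (by omega) s hs) hM
        (ht.trans hy)).trans (by gcongr)
    have hmem : ∀ t ∈ uIcc 0 y, |t| ≤ |y| := fun t ht => by
      simpa using abs_sub_left_of_mem_uIcc ht
    have hmvt := (convex_uIcc 0 y).norm_image_sub_le_of_norm_hasDerivWithin_le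
      (fun t ht => (hderiv t (hmem t ht)).hasDerivWithinAt) (fun t ht => hbound t (hmem t ht))
      left_mem_uIcc right_mem_uIcc
    simpa [Finset.sum_range_succ', pow_succ, mul_assoc] using hmvt

section IteratedDerivSnd

variable {E F : Type*} [NormedAddCommGroup E] [NormedSpace ℝ E]
  [NormedAddCommGroup F] [NormedSpace ℝ F]

theorem iteratedDeriv_zero_eq_zero_of_odd {f : ℝ → F} (hf : (fun t => f (-t)) =ᶠ[𝓝 0] f) {k : ℕ}
    (hk : Odd k) : iteratedDeriv k f 0 = 0 := by
  have h := hf.iteratedDeriv_eq k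
  rw [iteratedDeriv_comp_neg, neg_zero, hk.neg_one_pow, neg_one_smul, neg_eq_iff_add_eq_zero,
    ← two_smul ℝ] at h
  exact (smul_eq_zero.1 h).resolve_left two_ne_zero

noncomputable def iteratedDerivSnd (G : E × ℝ → F) : ℕ → E × ℝ → F
  | 0 => G
  | k + 1 => fun p => fderiv ℝ (iteratedDerivSnd G k) p (0, 1)

variable {G : E × ℝ → F}

theorem ContDiffAt.iteratedDerivSnd {n : WithTop ℕ∞} {p : E × ℝ} (hG : ContDiffAt ℝ n G p)
    {k m : ℕ} (hkm : ((m + k : ℕ) : WithTop ℕ∞) ≤ n) :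
    ContDiffAt ℝ m (iteratedDerivSnd G k) p := by
  induction k generalizing m with
  | zero => exact hG.of_le hkm
  | succ k ih =>
    have hfd := (ih (m := m + 1) (by rwa [add_right_comm])).fderiv_right (m := m) (by norm_cast)
    exact (ContinuousLinearMap.apply ℝ F ((0 : E), (1 : ℝ))).contDiff.contDiffAt.comp p hfd

theorem hasDerivAt_iteratedDerivSnd {k : ℕ} {x : E} {y : ℝ}
    (hG : ContDiffAt ℝ (k + 1) G (x, y)) :
    HasDerivAt (fun t => iteratedDerivSnd G k (x, t)) (iteratedDerivSnd G (k + 1) (x, y)) y := by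
  have hd : DifferentiableAt ℝ (iteratedDerivSnd G k) (x, y) :=
    (hG.iteratedDerivSnd (m := 1) (by push_cast; rw [add_comm])).differentiableAt one_ne_zero
  exact hd.hasFDerivAt.comp_hasDerivAt y ((hasDerivAt_const y x).prodMk (hasDerivAt_id y))

theorem iteratedDeriv_eventuallyEq_iteratedDerivSnd {k : ℕ} {x : E} {y : ℝ}
    (hG : ∀ᶠ t in 𝓝 y, ContDiffAt ℝ k G (x, t)) :
    iteratedDeriv k (fun t => G (x, t)) =ᶠ[𝓝 y] fun t => iteratedDerivSnd G k (x, t) := by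
  induction k with
  | zero => exact .of_forall fun t => by simp [iteratedDerivSnd]
  | succ k ih =>
    rw [iteratedDeriv_succ]
    refine (ih (hG.mono fun t ht => ht.of_le (by norm_cast; omega))).deriv.trans ?_
    filter_upwards [eventually_eventually_nhds.2 hG] with t ht
    exact (hasDerivAt_iteratedDerivSnd ht.self_of_nhds).deriv

theorem iteratedDerivSnd_zero_eq_zero_of_odd {k : ℕ} {x : E}
    (hG : ∀ᶠ t in 𝓝 0, ContDiffAt ℝ k G (x, t))
    (heven : (fun t => G (x, -t)) =ᶠ[𝓝 0] fun t => G (x, t)) (hk : Odd k) :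
    iteratedDerivSnd G k (x, 0) = 0 := by
  rw [← (iteratedDeriv_eventuallyEq_iteratedDerivSnd hG).eq_of_nhds]
  exact iteratedDeriv_zero_eq_zero_of_odd heven hk

end IteratedDerivSnd

section EvenTaylor

variable {E : Type*} [NormedAddCommGroup E] [NormedSpace ℝ E] {G : E × ℝ → ℝ} {x : E} {ρ M y : ℝ}

theorem abs_iteratedDerivSnd_sub_taylorSum_le {j n : ℕ}
    (hG : ∀ t, |t| ≤ ρ → ContDiffAt ℝ (j + n : ℕ) G (x, t))
    (hM : ∀ t, |t| ≤ ρ → |iteratedDerivSnd G (j + n) (x, t)| ≤ M) (hy : |y| ≤ ρ) :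
    |iteratedDerivSnd G j (x, y) -
        ∑ k ∈ Finset.range n, iteratedDerivSnd G (j + k) (x, 0) * y ^ k / k.factorial| ≤
      M * |y| ^ n :=
  abs_sub_taylorSum_le (f := fun k t => iteratedDerivSnd G (j + k) (x, t))
    (fun k hk t ht => hasDerivAt_iteratedDerivSnd ((hG t ht).of_le (by norm_cast; omega))) hM hy

theorem abs_iteratedDerivSnd_one_sub_le (hG : ∀ t, |t| ≤ ρ → ContDiffAt ℝ 5 G (x, t))
    (hM : ∀ t, |t| ≤ ρ → |iteratedDerivSnd G 5 (x, t)| ≤ M)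
    (h₁ : iteratedDerivSnd G 1 (x, 0) = 0) (h₃ : iteratedDerivSnd G 3 (x, 0) = 0) (hy : |y| ≤ ρ) :
    |iteratedDerivSnd G 1 (x, y) -
      (iteratedDerivSnd G 2 (x, 0) * y + iteratedDerivSnd G 4 (x, 0) / 6 * y ^ 3)| ≤ M * y ^ 4 := by
  have h := abs_iteratedDerivSnd_sub_taylorSum_le (j := 1) (n := 4) hG hM hy
  rw [(by decide : Even 4).pow_abs] at h
  convert h using 3
  simp [Finset.sum_range_succ, Nat.factorial, h₁, h₃]
  ring

theorem abs_iteratedDerivSnd_two_sub_le (hG : ∀ t, |t| ≤ ρ → ContDiffAt ℝ 6 G (x, t))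
    (hM : ∀ t, |t| ≤ ρ → |iteratedDerivSnd G 6 (x, t)| ≤ M)
    (h₃ : iteratedDerivSnd G 3 (x, 0) = 0) (h₅ : iteratedDerivSnd G 5 (x, 0) = 0) (hy : |y| ≤ ρ) :
    |iteratedDerivSnd G 2 (x, y) -
      (iteratedDerivSnd G 2 (x, 0) + iteratedDerivSnd G 4 (x, 0) / 2 * y ^ 2)| ≤ M * y ^ 4 := by
  have h := abs_iteratedDerivSnd_sub_taylorSum_le (j := 2) (n := 4) hG hM hy
  rw [(by decide : Even 4).pow_abs] at h
  convert h using 3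
  simp [Finset.sum_range_succ, Nat.factorial, h₃, h₅]
  ring

end EvenTaylor

theorem exists_abs_le_of_continuousAt {f : ℝ × ℝ → ℝ} {a ρ : ℝ}
    (hf : ∀ A y, |A - a| ≤ ρ → |y| ≤ ρ → ContinuousAt f (A, y)) :
    ∃ M, ∀ A y, |A - a| ≤ ρ → |y| ≤ ρ → |f (A, y)| ≤ M := by
  have hmem : ∀ A y, (A, y) ∈ Metric.closedBall ((a, 0) : ℝ × ℝ) ρ ↔ |A - a| ≤ ρ ∧ |y| ≤ ρ := by
    simp [Prod.dist_eq, Real.dist_eq]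
  obtain ⟨M, hM⟩ := (isCompact_closedBall ((a, 0) : ℝ × ℝ) ρ).exists_bound_of_continuousOn
    fun p hp => (hf p.1 p.2 ((hmem p.1 p.2).1 hp).1 ((hmem p.1 p.2).1 hp).2).continuousWithinAt
  exact ⟨M, fun A y hA hy => hM (A, y) ((hmem A y).2 ⟨hA, hy⟩)⟩

theorem eventually_lt_of_sign_hasDerivAt {f f' : ℝ → ℝ} {x₀ : ℝ}
    (hf : ∀ᶠ x in 𝓝 x₀, HasDerivAt f (f' x) x)
    (hsign : ∀ᶠ x in 𝓝 x₀, SignType.sign (f' x) = SignType.sign (x - x₀)) :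
    ∀ᶠ x in 𝓝[≠] x₀, f x₀ < f x := by
  obtain ⟨a, b, ⟨hax, hxb⟩, hab⟩ := mem_nhds_iff_exists_Ioo_subset.1 (hf.and hsign)
  have hcont : ContinuousOn f (Ioo a b) := fun x hx => (hab hx).1.continuousAt.continuousWithinAt
  have hanti : StrictAntiOn f (Ioc a x₀) := by
    refine strictAntiOn_of_deriv_neg (convex_Ioc a x₀)
      (hcont.mono (Ioc_subset_Ioo_right hxb)) fun x hx => ?_
    rw [interior_Ioc] at hx
    obtain ⟨hd, hs⟩ := hab ⟨hx.1, hx.2.trans hxb⟩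
    rw [hd.deriv, ← sign_eq_neg_one_iff, hs, sign_eq_neg_one_iff, sub_neg]
    exact hx.2
  have hmono : StrictMonoOn f (Ico x₀ b) := by
    refine strictMonoOn_of_deriv_pos (convex_Ico x₀ b)
      (hcont.mono (Ico_subset_Ioo_left hax)) fun x hx => ?_
    rw [interior_Ico] at hx
    obtain ⟨hd, hs⟩ := hab ⟨hax.trans hx.1, hx.2⟩
    rw [hd.deriv, ← sign_eq_one_iff, hs, sign_eq_one_iff, sub_pos]
    exact hx.1
  filter_upwards [self_mem_nhdsWithin, nhdsWithin_le_nhds (Ioo_mem_nhds hax hxb)] with x hne hx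
  rcases lt_or_gt_of_ne hne with hlt | hgt
  · exact hanti ⟨hx.1, hlt.le⟩ ⟨hax, le_rfl⟩ hlt
  · exact hmono ⟨le_rfl, hxb⟩ ⟨hgt.le, hx.2⟩ hgt

theorem isLocalMin_of_sign_hasDerivAt {f f' : ℝ → ℝ} {x₀ : ℝ}
    (hf : ∀ᶠ x in 𝓝 x₀, HasDerivAt f (f' x) x)
    (hsign : ∀ᶠ x in 𝓝 x₀, SignType.sign (f' x) = SignType.sign (x - x₀)) :
    IsLocalMin f x₀ :=
  (eventually_nhdsWithin_iff.1 (eventually_lt_of_sign_hasDerivAt hf hsign)).mono fun x hx => by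
    rcases eq_or_ne x x₀ with rfl | hne
    exacts [le_rfl, (hx hne).le]

theorem continuousAt_of_sign_eq {X : Type*} [TopologicalSpace X] {f : X → ℝ → ℝ}
    {z lo hi : X → ℝ} {x₀ : X}
    (hsign : ∀ᶠ x in 𝓝 x₀, ∀ y ∈ Ioo (lo x) (hi x),
      SignType.sign (f x y) = SignType.sign (y - z x))
    (hz : z x₀ ∈ Ioo (lo x₀) (hi x₀)) (hlo : ContinuousAt lo x₀) (hhi : ContinuousAt hi x₀)
    (hf : ∀ y ∈ Ioo (lo x₀) (hi x₀), ContinuousAt (fun x => f x y) x₀) :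
    ContinuousAt z x₀ := by
  -- A point `c` just below `z x₀` has `f x₀ c < 0`; this persists near `x₀` and forces `c < z x`.
  refine tendsto_order.2 ⟨fun a ha => ?_, fun b hb => ?_⟩
  · set c := (max a (lo x₀) + z x₀) / 2
    have hc : c ∈ Ioo (lo x₀) (hi x₀) := ⟨by grind, by grind⟩
    have hfc : f x₀ c < 0 := by
      rw [← sign_eq_neg_one_iff, hsign.self_of_nhds c hc, sign_eq_neg_one_iff]; grind
    filter_upwards [hsign, (hf c hc).eventually_lt_const hfc, hlo.eventually_lt_const hc.1,
      hhi.eventually_const_lt hc.2] with x hx hfx hlox hhix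
    have : c < z x := by rwa [← sign_eq_neg_one_iff, hx c ⟨hlox, hhix⟩, sign_eq_neg_one_iff,
      sub_neg] at hfx
    grind
  · set d := (min b (hi x₀) + z x₀) / 2
    have hd : d ∈ Ioo (lo x₀) (hi x₀) := ⟨by grind, by grind⟩
    have hfd : 0 < f x₀ d := by
      rw [← sign_eq_one_iff, hsign.self_of_nhds d hd, sign_eq_one_iff]; grind
    filter_upwards [hsign, (hf d hd).eventually_const_lt hfd, hlo.eventually_lt_const hd.1,
      hhi.eventually_const_lt hd.2] with x hx hfx hlox hhix
    have : z x < d := by rwa [← sign_eq_one_iff, hx d ⟨hlox, hhix⟩, sign_eq_one_iff,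
      sub_pos] at hfx
    grind

theorem tendsto_div_nhds_one_of_mem_Ioo {α : Type*} {l : Filter α} {z e : α → ℝ}
    (he : ∀ᶠ x in l, 0 < e x)
    (h : ∀ θ > 0, ∀ᶠ x in l, z x ∈ Ioo ((1 - θ) * e x) ((1 + θ) * e x)) :
    Tendsto (fun x => z x / e x) l (𝓝 1) := by
  refine Metric.tendsto_nhds.2 fun θ hθ => ?_
  filter_upwards [he, h θ hθ] with x hex ⟨hlo, hhi⟩
  rw [Real.dist_eq, abs_sub_lt_iff, sub_lt_iff_lt_add, sub_lt_comm, div_lt_iff₀ hex,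
    lt_div_iff₀ hex]
  constructor <;> linarith

section CubicModel

variable {b e K θ y v : ℝ}

theorem neg_of_abs_sub_cubic_le (hb : 0 < b) (he : 0 < e) (hθ : 0 < θ) (hKe : K * e < θ * b)
    (hy : 0 < y) (hye : y ≤ (1 - θ) * e) (hv : |v - 4 * b * y * (y ^ 2 - e ^ 2)| ≤ K * y ^ 4) :
    v < 0 := by
  have hθ1 : θ < 1 := by nlinarith
  have hK : 0 ≤ K := nonneg_of_mul_nonneg_left ((abs_nonneg _).trans hv) (by positivity)
  have hy_le : y ≤ e := by nlinarith
  have hgap : y ^ 2 - e ^ 2 ≤ -(θ * e ^ 2) := by nlinarith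
  have hrem : K * y ^ 4 ≤ K * e * (e ^ 2 * y) := by
    have : y ^ 3 ≤ e ^ 3 := by gcongr
    nlinarith [mul_le_mul_of_nonneg_left this (mul_nonneg hK hy.le)]
  have hcubic : 4 * b * y * (y ^ 2 - e ^ 2) ≤ -(4 * θ * b) * (e ^ 2 * y) := by
    nlinarith [mul_le_mul_of_nonneg_left hgap (by positivity : (0:ℝ) ≤ 4 * b * y)]
  have : K * e * (e ^ 2 * y) < θ * b * (e ^ 2 * y) := by gcongr
  nlinarith [(abs_le.1 hv).2, mul_pos (mul_pos hθ hb) (by positivity : (0:ℝ) < e ^ 2 * y)]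

theorem pos_of_abs_sub_cubic_le (hb : 0 < b) (he : 0 < e) (hθ : 0 < θ) (hKe : K * e < θ * b)
    (hy : (1 + θ) * e ≤ y) (hye : y ≤ 2 * e) (hv : |v - 4 * b * y * (y ^ 2 - e ^ 2)| ≤ K * y ^ 4) :
    0 < v := by
  have hy0 : 0 < y := lt_of_lt_of_le (by positivity) hy
  have hK : 0 ≤ K := nonneg_of_mul_nonneg_left ((abs_nonneg _).trans hv) (by positivity)
  have hgap : 2 * θ * e ^ 2 ≤ y ^ 2 - e ^ 2 := by
    have := mul_self_le_mul_self (by positivity) hy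
    nlinarith [mul_pos (mul_pos hθ hθ) (mul_pos he he)]
  have hrem : K * y ^ 4 ≤ 8 * (K * e) * (e ^ 2 * y) := by
    have : y ^ 3 ≤ (2 * e) ^ 3 := by gcongr
    nlinarith [mul_le_mul_of_nonneg_left this (mul_nonneg hK hy0.le)]
  have hcubic : 8 * (θ * b) * (e ^ 2 * y) ≤ 4 * b * y * (y ^ 2 - e ^ 2) := by
    nlinarith [mul_le_mul_of_nonneg_left hgap (by positivity : (0:ℝ) ≤ 4 * b * y)]
  have : K * e * (e ^ 2 * y) < θ * b * (e ^ 2 * y) := by gcongr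
  nlinarith [(abs_le.1 hv).1]

theorem pos_of_abs_sub_cubic_deriv_le (hb : 0 < b) (he : 0 < e) (hKe : 12 * K * e ^ 2 < b)
    (hy : 2 / 3 * e ≤ y) (hye : y ≤ 2 * e) (hv : |v - 4 * b * (3 * y ^ 2 - e ^ 2)| ≤ K * y ^ 4) :
    0 < v := by
  have hy0 : 0 < y := lt_of_lt_of_le (by positivity) hy
  have hK : 0 ≤ K := nonneg_of_mul_nonneg_left ((abs_nonneg _).trans hv) (by positivity)
  have hgap : e ^ 2 / 3 ≤ 3 * y ^ 2 - e ^ 2 := by nlinarith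
  have hrem : K * y ^ 4 ≤ 16 * K * e ^ 4 := by
    have : y ^ 4 ≤ (2 * e) ^ 4 := by gcongr
    nlinarith
  have : 12 * K * e ^ 2 * e ^ 2 < b * e ^ 2 := by gcongr
  nlinarith [(abs_le.1 hv).1]


end CubicModel

/-- The constants in `remainder_lt` and `remainder_deriv_lt` are what makes the cubic model
`4 b y (y² - e²)` dominate the remainder on `[2e/3, 2e]`. -/
structure IsNearPitchfork (f f' : ℝ → ℝ) (b e K : ℝ) : Prop where
  pos_b : 0 < b
  pos_e : 0 < e
  hasDerivAt : ∀ y ∈ Ioc 0 (2 * e), HasDerivAt f (f' y) y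
  abs_sub_le : ∀ y ∈ Ioc 0 (2 * e), |f y - 4 * b * y * (y ^ 2 - e ^ 2)| ≤ K * y ^ 4
  abs_deriv_sub_le : ∀ y ∈ Ioc 0 (2 * e), |f' y - 4 * b * (3 * y ^ 2 - e ^ 2)| ≤ K * y ^ 4
  remainder_lt : 3 * K * e < b
  remainder_deriv_lt : 12 * K * e ^ 2 < b

namespace IsNearPitchfork

variable {f f' : ℝ → ℝ} {b e K : ℝ}

theorem mem_Ioo_of_eq_zero (h : IsNearPitchfork f f' b e K) {θ : ℝ} (hθ : 0 < θ)
    (hKe : K * e < θ * b) {z : ℝ} (hz : z ∈ Ioc 0 (2 * e)) (hfz : f z = 0) :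
    z ∈ Ioo ((1 - θ) * e) ((1 + θ) * e) := by
  constructor
  · by_contra! hle
    exact (neg_of_abs_sub_cubic_le h.pos_b h.pos_e hθ hKe hz.1 hle (h.abs_sub_le z hz)).ne hfz
  · by_contra! hle
    exact (pos_of_abs_sub_cubic_le h.pos_b h.pos_e hθ hKe hle hz.2 (h.abs_sub_le z hz)).ne' hfz

theorem exists_sign_eq (h : IsNearPitchfork f f' b e K) :
    ∃ z ∈ Ioo (2 / 3 * e) (4 / 3 * e),
      ∀ y ∈ Ioo 0 (2 * e), SignType.sign (f y) = SignType.sign (y - z) := by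
  have he := h.pos_e
  have hKe : K * e < 1 / 3 * b := by linarith [h.remainder_lt]
  have hcont : ContinuousOn f (Icc (2 / 3 * e) (2 * e)) := fun y hy =>
    (h.hasDerivAt y ⟨by linarith [hy.1], hy.2⟩).continuousAt.continuousWithinAt
  have hmono : StrictMonoOn f (Icc (2 / 3 * e) (2 * e)) := by
    refine strictMonoOn_of_deriv_pos (convex_Icc _ _) hcont fun y hy => ?_
    rw [interior_Icc] at hy
    have hy' : y ∈ Ioc 0 (2 * e) := ⟨by linarith [hy.1], hy.2.le⟩
    rw [(h.hasDerivAt y hy').deriv]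
    exact pos_of_abs_sub_cubic_deriv_le h.pos_b he h.remainder_deriv_lt hy.1.le hy.2.le
      (h.abs_deriv_sub_le y hy')
  have hleft : f (2 / 3 * e) < 0 :=
    neg_of_abs_sub_cubic_le h.pos_b he (by norm_num) hKe (by positivity) (by linarith)
      (h.abs_sub_le _ ⟨by positivity, by linarith⟩)
  have hright : 0 < f (4 / 3 * e) :=
    pos_of_abs_sub_cubic_le h.pos_b he (by norm_num) hKe (by linarith) (by linarith)
      (h.abs_sub_le _ ⟨by positivity, by linarith⟩)
  obtain ⟨z, hz, hfz⟩ := intermediate_value_Ioo (by linarith)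
    (hcont.mono (Icc_subset_Icc_right (by linarith))) ⟨hleft, hright⟩
  have hzI : z ∈ Icc (2 / 3 * e) (2 * e) := ⟨hz.1.le, by linarith [hz.2]⟩
  refine ⟨z, hz, fun y hy => ?_⟩
  rcases lt_trichotomy y z with hyz | rfl | hyz
  · rw [sign_neg (sub_neg.2 hyz), sign_eq_neg_one_iff]
    by_cases hy₁ : y ≤ 2 / 3 * e
    · exact neg_of_abs_sub_cubic_le h.pos_b he (by norm_num) hKe hy.1 (by linarith)
        (h.abs_sub_le y ⟨hy.1, hy.2.le⟩)
    · exact hfz ▸ hmono ⟨(not_le.1 hy₁).le, hy.2.le⟩ hzI hyz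
  · rw [hfz, sub_self]
  · rw [sign_pos (sub_pos.2 hyz), sign_eq_one_iff]
    exact hfz ▸ hmono hzI ⟨by linarith [hz.1], hy.2.le⟩ hyz

end IsNearPitchfork

/-- The positive critical point of the truncated energy `E₂(A) ε² + E₄(A) ε⁴`. -/
noncomputable def pitchforkAmplitude (E₂ E₄ : ℝ → ℝ) (A : ℝ) : ℝ := √(-E₂ A / (2 * E₄ A))

section PitchforkAmplitude

variable {E₂ E₄ : ℝ → ℝ} {a : ℝ}

theorem pitchforkAmplitude_pos (h₂ : E₂ a < 0) (h₄ : 0 < E₄ a) : 0 < pitchforkAmplitude E₂ E₄ a :=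
  Real.sqrt_pos.2 (div_pos (neg_pos.2 h₂) (by positivity))

theorem two_mul_mul_pitchforkAmplitude_sq (h₂ : E₂ a ≤ 0) (h₄ : 0 < E₄ a) :
    2 * E₄ a * pitchforkAmplitude E₂ E₄ a ^ 2 = -E₂ a := by
  rw [pitchforkAmplitude, Real.sq_sqrt (div_nonneg (neg_nonneg.2 h₂) (by positivity))]
  field_simp

theorem continuousAt_pitchforkAmplitude (hE₂ : ContinuousAt E₂ a) (hE₄ : ContinuousAt E₄ a)
    (h₄ : E₄ a ≠ 0) : ContinuousAt (pitchforkAmplitude E₂ E₄) a :=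
  (hE₂.neg.div (hE₄.const_mul 2) (mul_ne_zero two_ne_zero h₄)).sqrt

theorem tendsto_pitchforkAmplitude_div_sqrt {E₂' : ℝ} (h₀ : E₂ a = 0) (hE₂ : HasDerivAt E₂ E₂' a)
    (hE₄ : ContinuousAt E₄ a) (h₄ : E₄ a ≠ 0) :
    Tendsto (fun A => pitchforkAmplitude E₂ E₄ A / √(A - a)) (𝓝[>] a)
      (𝓝 √(-E₂' / (2 * E₄ a))) := by
  have hslope : Tendsto (fun A => -E₂ A / (A - a)) (𝓝[>] a) (𝓝 (-E₂')) := by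
    refine ((hasDerivAt_iff_tendsto_slope.1 hE₂).mono_left
      (nhdsWithin_mono _ fun x hx => ne_of_gt hx)).neg.congr fun A => ?_
    rw [slope_def_field, h₀, sub_zero, neg_div]
  refine ((hslope.div ((hE₄.const_mul 2).mono_left nhdsWithin_le_nhds)
    (mul_ne_zero two_ne_zero h₄)).sqrt).congr' ?_
  filter_upwards [self_mem_nhdsWithin] with A (hA : a < A)
  rw [pitchforkAmplitude, ← Real.sqrt_div' _ (sub_nonneg.2 hA.le), Pi.div_apply]
  congr 1
  ring

end PitchforkAmplitude

/-- A quantitative local form of an even energy `G` on the box `|A - A*| ≤ ρ`, `|y| ≤ ρ`: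
`g` and `g'` stand for `∂G/∂ε` and `∂²G/∂ε²`, and the two estimates are Taylor's formula at
`ε = 0`, whose odd coefficients vanish by evenness. -/
structure PitchforkExpansion (G g g' : ℝ × ℝ → ℝ) (E₂ E₄ : ℝ → ℝ) (Astar ρ K : ℝ) : Prop where
  pos : 0 < ρ
  hasDerivAt_G : ∀ A y, |A - Astar| ≤ ρ → |y| ≤ ρ →
    HasDerivAt (fun t => G (A, t)) (g (A, y)) y
  hasDerivAt_g : ∀ A y, |A - Astar| ≤ ρ → |y| ≤ ρ →
    HasDerivAt (fun t => g (A, t)) (g' (A, y)) y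
  continuousAt_g : ∀ A y, |A - Astar| ≤ ρ → |y| ≤ ρ → ContinuousAt g (A, y)
  g_zero : ∀ A, |A - Astar| ≤ ρ → g (A, 0) = 0
  g'_zero : ∀ A, |A - Astar| ≤ ρ → g' (A, 0) = 2 * E₂ A
  abs_g_sub_le : ∀ A y, |A - Astar| ≤ ρ → |y| ≤ ρ →
    |g (A, y) - (2 * E₂ A * y + 4 * E₄ A * y ^ 3)| ≤ K * y ^ 4
  abs_g'_sub_le : ∀ A y, |A - Astar| ≤ ρ → |y| ≤ ρ →
    |g' (A, y) - (2 * E₂ A + 12 * E₄ A * y ^ 2)| ≤ K * y ^ 4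
  continuousAt_E₂ : ∀ A, |A - Astar| ≤ ρ → ContinuousAt E₂ A
  continuousAt_E₄ : ∀ A, |A - Astar| ≤ ρ → ContinuousAt E₄ A

namespace PitchforkExpansion

variable {G g g' : ℝ × ℝ → ℝ} {E₂ E₄ : ℝ → ℝ} {Astar ρ K : ℝ}

theorem eventually_lt_of_pos (P : PitchforkExpansion G g g' E₂ E₄ Astar ρ K) {A : ℝ}
    (hA : |A - Astar| ≤ ρ) (h₂ : 0 < E₂ A) : ∀ᶠ ε in 𝓝[≠] (0 : ℝ), G (A, 0) < G (A, ε) := by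
  have hbox : ∀ᶠ y in 𝓝 (0 : ℝ), |y| ≤ ρ := by
    filter_upwards [Metric.closedBall_mem_nhds (0 : ℝ) P.pos] with y hy
    simpa using hy
  have hsign := eventually_nhdsWithin_sign_eq_of_deriv_pos
    (by rw [(P.hasDerivAt_g A 0 hA (by simpa using P.pos.le)).deriv, P.g'_zero A hA]; positivity)
    (P.g_zero A hA)
  simpa using eventually_lt_of_sign_hasDerivAt (hbox.mono fun y hy => P.hasDerivAt_G A y hA hy)
    (by simpa using hsign)

theorem isNearPitchfork (P : PitchforkExpansion G g g' E₂ E₄ Astar ρ K) {A : ℝ}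
    (hA : |A - Astar| ≤ ρ) (h₂ : E₂ A < 0) (h₄ : 0 < E₄ A)
    (hρ : 2 * pitchforkAmplitude E₂ E₄ A ≤ ρ) (hK₁ : 3 * K * pitchforkAmplitude E₂ E₄ A < E₄ A)
    (hK₂ : 12 * K * pitchforkAmplitude E₂ E₄ A ^ 2 < E₄ A) :
    IsNearPitchfork (fun y => g (A, y)) (fun y => g' (A, y)) (E₄ A)
      (pitchforkAmplitude E₂ E₄ A) K := by
  have hE₂ := two_mul_mul_pitchforkAmplitude_sq h₂.le h₄
  have hy : ∀ y ∈ Ioc 0 (2 * pitchforkAmplitude E₂ E₄ A), |y| ≤ ρ := fun y hy => by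
    rw [abs_of_pos hy.1]; exact hy.2.trans hρ
  refine ⟨h₄, pitchforkAmplitude_pos h₂ h₄, fun y hy' => P.hasDerivAt_g A y hA (hy y hy'),
    fun y hy' => ?_, fun y hy' => ?_, hK₁, hK₂⟩
  · convert P.abs_g_sub_le A y hA (hy y hy') using 3; linear_combination (-2 * y) * hE₂
  · convert P.abs_g'_sub_le A y hA (hy y hy') using 3; linear_combination (-2) * hE₂

theorem eventually_abs_sub_le (P : PitchforkExpansion G g g' E₂ E₄ Astar ρ K) :
    ∀ᶠ A in 𝓝 Astar, |A - Astar| ≤ ρ := by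
  filter_upwards [Metric.closedBall_mem_nhds Astar P.pos] with A hA
  simpa [Real.dist_eq] using hA

theorem exists_strict_min_at_zero (P : PitchforkExpansion G g g' E₂ E₄ Astar ρ K)
    (h₀ : E₂ Astar = 0) (hE₂ : deriv E₂ Astar < 0) :
    ∃ δ : ℝ, 0 < δ ∧ ∀ A ∈ Ioo (Astar - δ) Astar,
      ∀ᶠ ε in 𝓝[≠] (0 : ℝ), G (A, 0) < G (A, ε) := by
  obtain ⟨δ, hδ, h⟩ := Metric.eventually_nhds_iff.1
    (P.eventually_abs_sub_le.and (eventually_nhdsWithin_sign_eq_of_deriv_neg hE₂ h₀))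
  refine ⟨δ, hδ, fun A hA => ?_⟩
  obtain ⟨hAρ, hs⟩ := @h A (by
    rw [Real.dist_eq, abs_sub_lt_iff]; constructor <;> linarith [hA.1, hA.2])
  exact P.eventually_lt_of_pos hAρ (by rwa [sign_pos (sub_pos.2 hA.2), sign_eq_one_iff] at hs)

theorem continuousAt_E₂_center (P : PitchforkExpansion G g g' E₂ E₄ Astar ρ K) :
    ContinuousAt E₂ Astar :=
  P.continuousAt_E₂ Astar (by simpa using P.pos.le)

theorem continuousAt_E₄_center (P : PitchforkExpansion G g g' E₂ E₄ Astar ρ K) :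
    ContinuousAt E₄ Astar :=
  P.continuousAt_E₄ Astar (by simpa using P.pos.le)

theorem tendsto_pitchforkAmplitude (P : PitchforkExpansion G g g' E₂ E₄ Astar ρ K)
    (h₀ : E₂ Astar = 0) (h₄ : E₄ Astar ≠ 0) :
    Tendsto (pitchforkAmplitude E₂ E₄) (𝓝 Astar) (𝓝 0) := by
  simpa [pitchforkAmplitude, h₀] using
    (continuousAt_pitchforkAmplitude P.continuousAt_E₂_center P.continuousAt_E₄_center h₄).tendsto

theorem eventually_mul_pitchforkAmplitude_lt (P : PitchforkExpansion G g g' E₂ E₄ Astar ρ K)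
    (h₀ : E₂ Astar = 0) (h₄ : 0 < E₄ Astar) (c : ℝ) {θ : ℝ} (hθ : 0 < θ) (n : ℕ) :
    ∀ᶠ A in 𝓝 Astar, c * pitchforkAmplitude E₂ E₄ A ^ (n + 1) < θ * E₄ A := by
  refine Tendsto.eventually_lt ?_ (P.continuousAt_E₄_center.tendsto.const_mul θ) (by positivity)
  simpa using ((P.tendsto_pitchforkAmplitude h₀ h₄.ne').pow (n + 1)).const_mul c

theorem exists_isNearPitchfork (P : PitchforkExpansion G g g' E₂ E₄ Astar ρ K)
    (h₀ : E₂ Astar = 0) (hE₂ : deriv E₂ Astar < 0) (h₄ : 0 < E₄ Astar) :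
    ∃ δ > 0, ∀ A ∈ Ioo Astar (Astar + δ), |A - Astar| ≤ ρ ∧ 2 * pitchforkAmplitude E₂ E₄ A ≤ ρ ∧
      IsNearPitchfork (fun y => g (A, y)) (fun y => g' (A, y)) (E₄ A)
        (pitchforkAmplitude E₂ E₄ A) K := by
  have hsign := eventually_nhdsWithin_sign_eq_of_deriv_neg hE₂ h₀
  have hgood : ∀ᶠ A in 𝓝[>] Astar, |A - Astar| ≤ ρ ∧ 2 * pitchforkAmplitude E₂ E₄ A ≤ ρ ∧
      IsNearPitchfork (fun y => g (A, y)) (fun y => g' (A, y)) (E₄ A)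
        (pitchforkAmplitude E₂ E₄ A) K := by
    filter_upwards [self_mem_nhdsWithin, nhdsWithin_le_nhds (P.eventually_abs_sub_le.and hsign),
      nhdsWithin_le_nhds (P.continuousAt_E₄_center.eventually_const_lt h₄),
      nhdsWithin_le_nhds ((P.tendsto_pitchforkAmplitude h₀ h₄.ne').eventually_lt_const
        (half_pos P.pos)),
      nhdsWithin_le_nhds (P.eventually_mul_pitchforkAmplitude_lt h₀ h₄ (3 * K) one_pos 0),
      nhdsWithin_le_nhds (P.eventually_mul_pitchforkAmplitude_lt h₀ h₄ (12 * K) one_pos 1)]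
      with A (hgt : Astar < A) ⟨hA, hs⟩ h₄A hρ hK₁ hK₂
    have h₂ : E₂ A < 0 := by
      rwa [sign_neg (sub_neg.2 hgt), sign_eq_neg_one_iff] at hs
    refine ⟨hA, by linarith, P.isNearPitchfork hA h₂ h₄A (by linarith) (by simpa using hK₁)
      (by simpa using hK₂)⟩
  obtain ⟨u, hu, hsub⟩ := mem_nhdsGT_iff_exists_Ioo_subset.1 hgood
  exact ⟨u - Astar, sub_pos.2 hu, fun A hA => hsub (by rwa [add_sub_cancel] at hA)⟩

theorem tendsto_div_sqrt (P : PitchforkExpansion G g g' E₂ E₄ Astar ρ K) (h₀ : E₂ Astar = 0)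
    {E₂' : ℝ} (hE₂ : HasDerivAt E₂ E₂' Astar) (h₄ : 0 < E₄ Astar) {δ : ℝ} (hδ : 0 < δ)
    (hnear : ∀ A ∈ Ioo Astar (Astar + δ), IsNearPitchfork (fun y => g (A, y))
      (fun y => g' (A, y)) (E₄ A) (pitchforkAmplitude E₂ E₄ A) K)
    {z : ℝ → ℝ} (hz : ∀ A ∈ Ioo Astar (Astar + δ),
      z A ∈ Ioc 0 (2 * pitchforkAmplitude E₂ E₄ A) ∧ g (A, z A) = 0) :
    Tendsto (fun A => z A / √(A - Astar)) (𝓝[>] Astar) (𝓝 √(-E₂' / (2 * E₄ Astar))) := by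
  have hI : Ioo Astar (Astar + δ) ∈ 𝓝[>] Astar := Ioo_mem_nhdsGT (by linarith)
  have hratio : Tendsto (fun A => z A / pitchforkAmplitude E₂ E₄ A) (𝓝[>] Astar) (𝓝 1) := by
    refine tendsto_div_nhds_one_of_mem_Ioo ?_ fun θ hθ => ?_
    · filter_upwards [hI] with A hA using (hnear A hA).pos_e
    · filter_upwards [hI, nhdsWithin_le_nhds
        (P.eventually_mul_pitchforkAmplitude_lt h₀ h₄ K hθ 0)] with A hA hK
      exact (hnear A hA).mem_Ioo_of_eq_zero hθ (by simpa using hK) (hz A hA).1 (hz A hA).2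
  have hamp := tendsto_pitchforkAmplitude_div_sqrt h₀ hE₂ P.continuousAt_E₄_center h₄.ne'
  refine (one_mul (√(-E₂' / (2 * E₄ Astar))) ▸ hratio.mul hamp).congr' ?_
  filter_upwards [hI] with A hA
  exact div_mul_div_cancel₀ (hnear A hA).pos_e.ne'

theorem exists_branch (P : PitchforkExpansion G g g' E₂ E₄ Astar ρ K) (h₀ : E₂ Astar = 0)
    (hE₂ : deriv E₂ Astar < 0) (h₄ : 0 < E₄ Astar) :
    ∃ δ : ℝ, 0 < δ ∧ ∃ εbar : ℝ → ℝ,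
      ContinuousOn εbar (Ioo Astar (Astar + δ)) ∧
      (∀ A ∈ Ioo Astar (Astar + δ),
        0 < εbar A ∧ deriv (fun ε => G (A, ε)) (εbar A) = 0 ∧
          IsLocalMin (fun ε => G (A, ε)) (εbar A)) ∧
      Tendsto (fun A => εbar A / √(A - Astar)) (𝓝[>] Astar)
        (𝓝 √(-deriv E₂ Astar / (2 * E₄ Astar))) := by
  set e := pitchforkAmplitude E₂ E₄
  obtain ⟨δ, hδ, hgood⟩ := P.exists_isNearPitchfork h₀ hE₂ h₄
  choose! εbar hεbar hsign using fun A hA => (hgood A hA).2.2.exists_sign_eq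
  have hmem : ∀ A ∈ Ioo Astar (Astar + δ), εbar A ∈ Ioo 0 (2 * e A) := fun A hA => by
    have := (hgood A hA).2.2.pos_e
    exact ⟨by linarith [(hεbar A hA).1], by linarith [(hεbar A hA).2]⟩
  have hzero : ∀ A ∈ Ioo Astar (Astar + δ), g (A, εbar A) = 0 := fun A hA => by
    simpa using hsign A hA _ (hmem A hA)
  have hderiv : ∀ A ∈ Ioo Astar (Astar + δ), ∀ y ∈ Ioo 0 (2 * e A),
      HasDerivAt (fun t => G (A, t)) (g (A, y)) y := fun A hA y hy => by
    refine P.hasDerivAt_G A y (hgood A hA).1 ?_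
    rw [abs_of_pos hy.1]; exact hy.2.le.trans (hgood A hA).2.1
  refine ⟨δ, hδ, εbar, fun A hA => ContinuousAt.continuousWithinAt ?_, fun A hA => ?_, ?_⟩
  · obtain ⟨hAρ, hρ, hnear⟩ := hgood A hA
    refine continuousAt_of_sign_eq (f := fun A y => g (A, y)) (lo := fun _ => 0)
      (hi := fun A => 2 * e A) ?_ (hmem A hA) continuousAt_const
      ((continuousAt_pitchforkAmplitude (P.continuousAt_E₂ A hAρ) (P.continuousAt_E₄ A hAρ)
        hnear.pos_b.ne').const_mul 2) fun y hy => ?_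
    · filter_upwards [isOpen_Ioo.mem_nhds hA] with A' hA' using hsign A' hA'
    · refine (P.continuousAt_g A y hAρ ?_).comp₂ continuousAt_id continuousAt_const
      rw [abs_of_pos hy.1]; exact hy.2.le.trans hρ
  · have hnhds := isOpen_Ioo.mem_nhds (hmem A hA)
    refine ⟨(hmem A hA).1, (hderiv A hA _ (hmem A hA)).deriv.trans (hzero A hA),
      isLocalMin_of_sign_hasDerivAt (f' := fun y => g (A, y)) ?_ ?_⟩
    · filter_upwards [hnhds] with y hy using hderiv A hA y hy
    · filter_upwards [hnhds] with y hy using hsign A hA y hy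
  · exact P.tendsto_div_sqrt h₀ (differentiableAt_of_deriv_ne_zero hE₂.ne).hasDerivAt h₄ hδ
      (fun A hA => (hgood A hA).2.2) fun A hA => ⟨⟨(hmem A hA).1, (hmem A hA).2.le⟩, hzero A hA⟩

end PitchforkExpansion

theorem PitchforkExpansion.exists_of_contDiffAt {G : ℝ × ℝ → ℝ} {E₂ E₄ : ℝ → ℝ} {Astar r : ℝ}
    (hr : 0 < r) (hG : ∀ A y, |A - Astar| < r → |y| < r → ContDiffAt ℝ 6 G (A, y))
    (hodd : ∀ A, |A - Astar| < r → ∀ k ≤ 5, Odd k → iteratedDerivSnd G k (A, 0) = 0)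
    (hE₂ : ∀ A, |A - Astar| < r → iteratedDerivSnd G 2 (A, 0) = 2 * E₂ A)
    (hE₄ : ∀ A, |A - Astar| < r → iteratedDerivSnd G 4 (A, 0) = 24 * E₄ A) :
    ∃ ρ K, PitchforkExpansion G (iteratedDerivSnd G 1) (iteratedDerivSnd G 2) E₂ E₄ Astar ρ K := by
  have hcont : ∀ k ≤ 6, ∀ A y, |A - Astar| < r → |y| < r →
      ContinuousAt (iteratedDerivSnd G k) (A, y) := fun k hk A y hA hy =>
    ((hG A y hA hy).iteratedDerivSnd (m := 0) (by simpa using hk)).continuousAt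
  have hcontE : ∀ (c : ℝ) (E : ℝ → ℝ) (k : ℕ), c ≠ 0 → k ≤ 6 →
      (∀ A, |A - Astar| < r → iteratedDerivSnd G k (A, 0) = c * E A) →
      ∀ A, |A - Astar| < r → ContinuousAt E A := fun c E k hc hk hE A hA => by
    refine (((hcont k hk A 0 hA (by simpa using hr)).comp₂ continuousAt_id
      continuousAt_const).const_mul c⁻¹).congr ?_
    filter_upwards [(continuous_id.sub continuous_const).abs.continuousAt.eventually_lt
      continuousAt_const hA] with A' (hA' : |A' - Astar| < r)
    simp [hE A' hA', hc]
  set ρ := r / 2 with hρ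
  have hρr : ∀ x : ℝ, |x| ≤ ρ → |x| < r := fun x hx => by linarith
  have hcd : ∀ A y, |A - Astar| ≤ ρ → |y| ≤ ρ → ContDiffAt ℝ 6 G (A, y) :=
    fun A y hA hy => hG A y (hρr _ hA) (hρr _ hy)
  obtain ⟨M₅, hM₅⟩ := exists_abs_le_of_continuousAt (a := Astar) (ρ := ρ)
    fun A y hA hy => hcont 5 (by norm_num) A y (hρr _ hA) (hρr _ hy)
  obtain ⟨M₆, hM₆⟩ := exists_abs_le_of_continuousAt (a := Astar) (ρ := ρ)
    fun A y hA hy => hcont 6 (by norm_num) A y (hρr _ hA) (hρr _ hy)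
  refine ⟨ρ, max M₅ M₆, ⟨by positivity, fun A y hA hy => ?_, fun A y hA hy => ?_,
    fun A y hA hy => hcont 1 (by norm_num) A y (hρr _ hA) (hρr _ hy),
    fun A hA => hodd A (hρr _ hA) 1 (by norm_num) odd_one, fun A hA => hE₂ A (hρr _ hA),
    fun A y hA hy => ?_, fun A y hA hy => ?_,
    fun A hA => hcontE 2 E₂ 2 two_ne_zero (by norm_num) hE₂ A (hρr _ hA),
    fun A hA => hcontE 24 E₄ 4 (by norm_num) (by norm_num) hE₄ A (hρr _ hA)⟩⟩
  · exact hasDerivAt_iteratedDerivSnd (k := 0) ((hcd A y hA hy).of_le (by norm_num))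
  · exact hasDerivAt_iteratedDerivSnd (k := 1) ((hcd A y hA hy).of_le (by norm_num))
  · have h := abs_iteratedDerivSnd_one_sub_le (fun t ht => (hcd A t hA ht).of_le (by norm_num))
      (fun t ht => (hM₅ A t hA ht).trans (le_max_left M₅ M₆))
      (hodd A (hρr _ hA) 1 (by norm_num) odd_one) (hodd A (hρr _ hA) 3 (by norm_num) (by decide)) hy
    rw [hE₂ A (hρr _ hA), hE₄ A (hρr _ hA)] at h
    convert h using 3; ring
  · have h := abs_iteratedDerivSnd_two_sub_le (fun t ht => hcd A t hA ht)
      (fun t ht => (hM₆ A t hA ht).trans (le_max_right M₅ M₆))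
      (hodd A (hρr _ hA) 3 (by norm_num) (by decide))
      (hodd A (hρr _ hA) 5 (by norm_num) (by decide)) hy
    rw [hE₂ A (hρr _ hA), hE₄ A (hρr _ hA)] at h
    convert h using 3; ring

theorem exists_pitchforkExpansion {G : ℝ × ℝ → ℝ} {Astar : ℝ} {U : Set (ℝ × ℝ)}
    (hU : U ∈ 𝓝 ((Astar, 0) : ℝ × ℝ)) (hG : ContDiffOn ℝ 6 G U)
    (heven : ∀ A ε : ℝ, (A, ε) ∈ U → G (A, -ε) = G (A, ε)) {E₂ E₄ : ℝ → ℝ}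
    (hE₂ : ∀ A : ℝ, E₂ A = (1 / 2) * iteratedDeriv 2 (fun ε => G (A, ε)) 0)
    (hE₄ : ∀ A : ℝ, E₄ A = (1 / 24) * iteratedDeriv 4 (fun ε => G (A, ε)) 0) :
    ∃ ρ K, PitchforkExpansion G (iteratedDerivSnd G 1) (iteratedDerivSnd G 2) E₂ E₄ Astar ρ K := by
  obtain ⟨r, hr, hball⟩ := Metric.mem_nhds_iff.1 hU
  have hmem : ∀ A y, |A - Astar| < r → |y| < r → (A, y) ∈ Metric.ball ((Astar, 0) : ℝ × ℝ) r :=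
    fun A y hA hy => by simp [Prod.dist_eq, Real.dist_eq, hA, hy]
  have hcd : ∀ A y, |A - Astar| < r → |y| < r → ContDiffAt ℝ 6 G (A, y) := fun A y hA hy =>
    hG.contDiffAt (mem_of_superset (Metric.isOpen_ball.mem_nhds (hmem A y hA hy)) hball)
  have hslice : ∀ A, |A - Astar| < r → ∀ k : ℕ, k ≤ 6 →
      ∀ᶠ t in 𝓝 (0 : ℝ), (A, t) ∈ U ∧ ContDiffAt ℝ k G (A, t) := fun A hA k hk => by
    filter_upwards [Ioo_mem_nhds (neg_neg_of_pos hr) hr] with t ht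
    exact ⟨hball (hmem A t hA (abs_lt.2 ht)),
      (hcd A t hA (abs_lt.2 ht)).of_le (by exact_mod_cast hk)⟩
  have hat0 : ∀ A, |A - Astar| < r → ∀ k ≤ 6,
      iteratedDerivSnd G k (A, 0) = iteratedDeriv k (fun t => G (A, t)) 0 := fun A hA k hk =>
    ((iteratedDeriv_eventuallyEq_iteratedDerivSnd
      ((hslice A hA k hk).mono fun _ ht => ht.2)).eq_of_nhds).symm
  refine PitchforkExpansion.exists_of_contDiffAt hr hcd (fun A hA k hk hodd => ?_)
    (fun A hA => ?_) (fun A hA => ?_)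
  · exact iteratedDerivSnd_zero_eq_zero_of_odd ((hslice A hA k (by omega)).mono fun _ ht => ht.2)
      ((hslice A hA 0 (by norm_num)).mono fun t ht => heven A t ht.1) hodd
  · rw [hat0 A hA 2 (by norm_num), hE₂]; ring
  · rw [hat0 A hA 4 (by norm_num), hE₄]; ring

/-- Second-order phase transition (pitchfork asymptotics): for an even-in-`ε`, `C⁶`
energy `G` with `E₂(A*) = 0`, `E₂'(A*) < 0`, `E₄(A*) > 0`:
(i) just below `A*`, `ε = 0` is a strict local minimizer of `ε ↦ G(A,ε)`;
(ii) just above `A*`, there is a continuous branch `ε̄(A) > 0` of critical points which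
are local minimizers, with `ε̄(A)/√(A−A*) → √(−E₂'(A*)/(2E₄(A*)))` as `A → A*⁺`. -/
theorem second_order_phase_transition
    (G : ℝ × ℝ → ℝ) (Astar : ℝ) (U : Set (ℝ × ℝ)) (hU : U ∈ 𝓝 ((Astar, 0) : ℝ × ℝ))
    (hG : ContDiffOn ℝ 6 G U)
    (heven : ∀ A ε : ℝ, (A, ε) ∈ U → G (A, -ε) = G (A, ε))
    (E₂ E₄ : ℝ → ℝ)
    (hE₂ : ∀ A : ℝ, E₂ A = (1 / 2) * iteratedDeriv 2 (fun ε => G (A, ε)) 0)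
    (hE₄ : ∀ A : ℝ, E₄ A = (1 / 24) * iteratedDeriv 4 (fun ε => G (A, ε)) 0)
    (hzero : E₂ Astar = 0) (hslope : deriv E₂ Astar < 0) (hE₄pos : 0 < E₄ Astar) :
    (∃ δ : ℝ, 0 < δ ∧ ∀ A ∈ Set.Ioo (Astar - δ) Astar,
      ∀ᶠ ε in 𝓝[≠] (0 : ℝ), G (A, 0) < G (A, ε)) ∧
    ∃ δ : ℝ, 0 < δ ∧ ∃ εbar : ℝ → ℝ,
      ContinuousOn εbar (Set.Ioo Astar (Astar + δ)) ∧
      (∀ A ∈ Set.Ioo Astar (Astar + δ),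
        0 < εbar A ∧ deriv (fun ε => G (A, ε)) (εbar A) = 0 ∧
          IsLocalMin (fun ε => G (A, ε)) (εbar A)) ∧
      Tendsto (fun A => εbar A / Real.sqrt (A - Astar)) (𝓝[>] Astar)
        (𝓝 (Real.sqrt (-(deriv E₂ Astar) / (2 * E₄ Astar)))) := by
  obtain ⟨ρ, K, P⟩ := exists_pitchforkExpansion hU hG heven hE₂ hE₄
  exact ⟨P.exists_strict_min_at_zero hzero hslope, P.exists_branch hzero hslope hE₄pos⟩
end

section
/- (Large-v₁ asymptotics of the double Yukawa parameters.) Fix κ₁ > 0 and for v₁ > e^{κ₁}/κ₁ define κ₂(v₁) := (κ₁·v₁ − e^{κ₁})/(v₁ + e^{κ₁}) and v₂(v₁) := e^{κ₂(v₁) − κ₁}·(1 + κ₁)·v₁/(1 + κ₂(v₁)). Then, as v₁ → ∞: κ₂(v₁) = κ₁ − (1 + κ₁)·e^{κ₁}/v₁ + O(1/v₁²) and v₂(v₁) = v₁ − κ₁·e^{κ₁} + O(1/v₁). -/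
open Asymptotics Filter Topology

/-!
With `E = exp κ₁` and `c = 1 + κ₁` one has `κ₂ - κ₁ = -cE/(v₁+E)` and `1 + κ₂ = c v₁/(v₁+E)`,
so `v₂ = (v₁+E) exp δ` with `δ = -cE/(v₁+E)`. Both errors are then explicit: the first is
`cE²/(v₁(v₁+E))`, the second is `(v₁+E)(exp δ - 1 - δ) = O(v₁ δ²) = O(1/v₁)`.
-/

lemma one_div_add_const_isBigO_one_div (b : ℝ) :
    (fun x : ℝ => 1 / (x + b)) =O[atTop] fun x => 1 / x := by
  have h : (fun x : ℝ => x + b) ~[atTop] id :=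
    ((isLittleO_const_id_atTop b).add_isEquivalent IsEquivalent.refl).congr_left
      (Eventually.of_forall fun x => add_comm b x)
  simp only [one_div]
  exact h.inv.isBigO

lemma Real.exp_sub_one_sub_id_isBigO_sq :
    (fun x => Real.exp x - 1 - x) =O[𝓝 0] fun x => x ^ 2 := by
  refine IsBigO.of_bound 1 ?_
  filter_upwards [Metric.closedBall_mem_nhds (0 : ℝ) one_pos] with x hx
  rw [one_mul, Real.norm_eq_abs, Real.norm_eq_abs, abs_sq]
  exact Real.abs_exp_sub_one_sub_id_le (by simpa using hx)

lemma mul_exp_div_sub_one_sub_div_isBigO (a : ℝ) :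
    (fun x => x * (Real.exp (a / x) - 1 - a / x)) =O[atTop] fun x => 1 / x := by
  have hsmall : Tendsto (fun x : ℝ => a / x) atTop (𝓝 0) := tendsto_const_nhds.div_atTop tendsto_id
  have h := (isBigO_refl (fun x : ℝ => x) atTop).mul
    (Real.exp_sub_one_sub_id_isBigO_sq.comp_tendsto hsmall)
  refine h.trans (((isBigO_refl (fun x : ℝ => 1 / x) atTop).const_mul_left (a ^ 2)).congr' ?_ .rfl)
  filter_upwards [eventually_ne_atTop 0] with x hx
  simp only [Function.comp_apply]
  field_simp

lemma double_yukawa_kappa_error_eq {κ E v : ℝ} (hv : v ≠ 0) (hvE : v + E ≠ 0) :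
    (κ * v - E) / (v + E) - (κ - (1 + κ) * E / v) = (1 + κ) * E ^ 2 * (1 / v * (1 / (v + E))) := by
  field_simp
  ring

lemma double_yukawa_v_error_eq {κ E v : ℝ} (hκ : 1 + κ ≠ 0) (hv : v ≠ 0) (hvE : v + E ≠ 0) :
    Real.exp ((κ * v - E) / (v + E) - κ) * (1 + κ) * v / (1 + (κ * v - E) / (v + E)) - (v - κ * E) =
      (v + E) * (Real.exp (-((1 + κ) * E) / (v + E)) - 1 - -((1 + κ) * E) / (v + E)) := by
  have hexp : (κ * v - E) / (v + E) - κ = -((1 + κ) * E) / (v + E) := by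
    field_simp
    ring
  have hden : 1 + (κ * v - E) / (v + E) = (1 + κ) * v / (v + E) := by
    field_simp
    ring
  rw [hexp, hden]
  field_simp
  ring

/-- Large-`v₁` asymptotics of the double Yukawa parameters: for fixed `κ₁ > 0`,
`κ₂(v₁) = κ₁ − (1+κ₁)e^{κ₁}/v₁ + O(1/v₁²)` and `v₂(v₁) = v₁ − κ₁e^{κ₁} + O(1/v₁)`
as `v₁ → ∞`. -/
theorem double_yukawa_large_v1_asymptotics (κ₁ : ℝ) (hκ₁ : 0 < κ₁) :
    let κ₂ : ℝ → ℝ := fun v₁ => (κ₁ * v₁ - Real.exp κ₁) / (v₁ + Real.exp κ₁)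
    let v₂ : ℝ → ℝ := fun v₁ => Real.exp (κ₂ v₁ - κ₁) * (1 + κ₁) * v₁ / (1 + κ₂ v₁)
    ((fun v₁ => κ₂ v₁ - (κ₁ - (1 + κ₁) * Real.exp κ₁ / v₁)) =O[atTop]
        fun v₁ => 1 / v₁ ^ 2) ∧
      (fun v₁ => v₂ v₁ - (v₁ - κ₁ * Real.exp κ₁)) =O[atTop] fun v₁ => 1 / v₁ := by
  intro κ₂ v₂
  set E := Real.exp κ₁
  have hsafe : ∀ᶠ v : ℝ in atTop, v ≠ 0 ∧ v + E ≠ 0 := by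
    filter_upwards [eventually_gt_atTop 0] with v hv
    exact ⟨hv.ne', by positivity⟩
  constructor
  · have h := ((isBigO_refl (fun v : ℝ => 1 / v) atTop).mul
      (one_div_add_const_isBigO_one_div E)).const_mul_left ((1 + κ₁) * E ^ 2)
    refine h.congr' ?_ (Eventually.of_forall fun v => by ring)
    filter_upwards [hsafe] with v ⟨hv, hvE⟩
    exact (double_yukawa_kappa_error_eq hv hvE).symm
  · have h := ((mul_exp_div_sub_one_sub_div_isBigO (-((1 + κ₁) * E))).comp_tendsto
      (tendsto_atTop_add_const_right _ E tendsto_id)).trans (one_div_add_const_isBigO_one_div E)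
    refine h.congr' ?_ .rfl
    filter_upwards [hsafe] with v ⟨hv, hvE⟩
    exact (double_yukawa_v_error_eq (by linarith : 0 < 1 + κ₁).ne' hv hvE).symm
end
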